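/- Let h ≥ 1, let w ∈ W be an article cited by more than h articles of V ∖ W, and let (x, w) ∈ A be an arc with x ∈ V ∖ W. Then, for each μ ∈ {scites, ucites, mcites}, there is a partition of W with H-index at least h with respect to μ in the citation graph D if and only if there is such a partition in the citation graph obtained from D by deleting the arc (x, w). -/
import Mathlib


open Finset

variable {V : Type*} [Fintype V] [DecidableEq V]

/-- The set of articles citing at least one article of `P` (the in-neighborhood `N⁻(P)`). -/
def citers (A : Finset (V × V)) (P : Finset V) : Finset V :=
  Finset.univ.filter fun u => ∃ v ∈ P, (u, v) ∈ A

/-- The number of citations (in-degree) of an article `v`. -/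
def indeg (A : Finset (V × V)) (v : V) : ℕ :=
  (Finset.univ.filter fun u => (u, v) ∈ A).card

/-- scites(P) = Σ_{v ∈ P} indeg(v). -/
def scites (A : Finset (V × V)) (P : Finset V) : ℕ :=
  ∑ v ∈ P, indeg A v

/-- ucites(P) = |N⁻(P)|. -/
def ucites (A : Finset (V × V)) (P : Finset V) : ℕ :=
  (citers A P).card

/-- mcites_𝒬(P) = |N⁻(P) ∖ W| + |{P' ∈ 𝒬 ∖ {P} : N⁻(P) ∩ P' ≠ ∅}|. -/
def mcites (A : Finset (V × V)) (W : Finset V) (𝒬 : Finset (Finset V))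
    (P : Finset V) : ℕ :=
  (citers A P \ W).card +
    ((𝒬.erase P).filter fun P' => (citers A P ∩ P').Nonempty).card

/-- `𝒬` is a partition of `W` into nonempty parts. -/
def IsPartition (W : Finset V) (𝒬 : Finset (Finset V)) : Prop :=
  (∀ P ∈ 𝒬, P.Nonempty) ∧ (∀ P ∈ 𝒬, P ⊆ W) ∧ ∀ v ∈ W, ∃! P, P ∈ 𝒬 ∧ v ∈ P

/-- The H-index of a partition `𝒬` w.r.t. a measure `μ`: the largest `h` such that
at least `h` parts `P ∈ 𝒬` satisfy `μ P ≥ h`. -/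
def hindex (𝒬 : Finset (Finset V)) (μ : Finset V → ℕ) : ℕ :=
  Nat.findGreatest (fun h => h ≤ (𝒬.filter fun P => h ≤ μ P).card) 𝒬.card

lemma ge_hindex_iff (𝒬 : Finset (Finset V)) (μ : Finset V → ℕ) (h : ℕ) :
    h ≤ hindex 𝒬 μ ↔ h ≤ (𝒬.filter fun P => h ≤ μ P).card := by
  constructor
  · intro hle
    have hspec : hindex 𝒬 μ ≤ (𝒬.filter fun P => hindex 𝒬 μ ≤ μ P).card :=
      Nat.findGreatest_spec (P := fun n => n ≤ (𝒬.filter fun P => n ≤ μ P).card)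
        (Nat.zero_le _) (Nat.zero_le _)
    have hsub : (𝒬.filter fun P => hindex 𝒬 μ ≤ μ P) ⊆ (𝒬.filter fun P => h ≤ μ P) := by
      intro P hP
      simp only [mem_filter] at hP ⊢
      exact ⟨hP.1, le_trans hle hP.2⟩
    exact le_trans hle (le_trans hspec (Finset.card_le_card hsub))
  · intro hc
    exact Nat.le_findGreatest (le_trans hc (Finset.card_filter_le _ _)) hc

lemma citers_mono {A' A : Finset (V × V)} (hAA : A' ⊆ A) (P : Finset V) :
    citers A' P ⊆ citers A P := by
  intro u hu
  simp only [citers, mem_filter, mem_univ, true_and] at hu ⊢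
  obtain ⟨v, hv, hva⟩ := hu
  exact ⟨v, hv, hAA hva⟩

lemma citers_erase_eq (A : Finset (V × V)) (x w : V) {P : Finset V} (hwP : w ∉ P) :
    citers (A.erase (x, w)) P = citers A P := by
  ext u
  simp only [citers, mem_filter, mem_univ, true_and, Finset.mem_erase]
  constructor
  · rintro ⟨v, hv, _, hva⟩; exact ⟨v, hv, hva⟩
  · rintro ⟨v, hv, hva⟩
    refine ⟨v, hv, fun he => ?_, hva⟩
    apply hwP
    have : v = w := (Prod.mk.injEq _ _ _ _ ▸ he).2
    exact this ▸ hv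
lemma indeg_mono {A' A : Finset (V × V)} (hAA : A' ⊆ A) (v : V) :
    indeg A' v ≤ indeg A v := by
  apply Finset.card_le_card
  intro u hu
  simp only [mem_filter, mem_univ, true_and] at hu ⊢
  exact hAA hu

lemma indeg_erase_eq (A : Finset (V × V)) (x : V) {v w : V} (hvw : v ≠ w) :
    indeg (A.erase (x, w)) v = indeg A v := by
  unfold indeg
  congr 1
  ext u
  simp only [mem_filter, mem_univ, true_and, Finset.mem_erase]
  constructor
  · rintro ⟨_, hm⟩; exact hm
  · intro hm
    exact ⟨fun he => hvw (Prod.ext_iff.mp he).2, hm⟩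

/-- if `w ∈ W` is cited by more than `h` articles of `V ∖ W` and
`(x, w)` is an arc with `x ∈ V ∖ W`, then for each `μ ∈ {scites, ucites, mcites}` a
partition of `W` with H-index at least `h` exists for `A` iff one exists for `A` with
the arc `(x, w)` deleted. -/
theorem stmt12 (A : Finset (V × V)) (W : Finset V) (h : ℕ) (hh : 1 ≤ h)
    (w : V) (hw : w ∈ W)
    (hmany : h < (Finset.univ.filter fun x => x ∉ W ∧ (x, w) ∈ A).card)
    (x : V) (hx : x ∉ W) (hxw : (x, w) ∈ A)
    (μ : Finset (V × V) → Finset (Finset V) → Finset V → ℕ)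
    (hμ : μ = (fun A' _ => scites A') ∨ μ = (fun A' _ => ucites A') ∨
      μ = (fun A' => mcites A' W)) :
    (∃ 𝒬, IsPartition W 𝒬 ∧ h ≤ hindex 𝒬 (μ A 𝒬)) ↔
      (∃ 𝒬, IsPartition W 𝒬 ∧ h ≤ hindex 𝒬 (μ (A.erase (x, w)) 𝒬)) := by
  set A' := A.erase (x, w) with hA'
  have hAsub : A' ⊆ A := Finset.erase_subset _ _
  have hxS : x ∈ Finset.univ.filter (fun u => u ∉ W ∧ (u, w) ∈ A) := by
    simp [hx, hxw]
  have hcard : h ≤ ((Finset.univ.filter fun u => u ∉ W ∧ (u, w) ∈ A).erase x).card := by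
    rw [Finset.card_erase_of_mem hxS]
    exact Nat.le_sub_one_of_lt hmany
  have hmemA' : ∀ u : V, u ≠ x → (u, w) ∈ A → (u, w) ∈ A' := by
    intro u hux huA
    rw [hA', Finset.mem_erase]
    exact ⟨fun he => hux (Prod.ext_iff.mp he).1, huA⟩
  have hSsub : ∀ P : Finset V, w ∈ P →
      (Finset.univ.filter fun u => u ∉ W ∧ (u, w) ∈ A).erase x ⊆ citers A' P \ W := by
    intro P hwP u hu
    simp only [Finset.mem_erase, mem_filter, mem_univ, true_and] at hu
    obtain ⟨hux, huW, huA⟩ := hu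
    simp only [Finset.mem_sdiff, citers, mem_filter, mem_univ, true_and]
    exact ⟨⟨w, hwP, hmemA' u hux huA⟩, huW⟩
  have hindegw : h ≤ indeg A' w := by
    refine le_trans hcard (Finset.card_le_card ?_)
    intro u hu
    simp only [Finset.mem_erase, mem_filter, mem_univ, true_and] at hu ⊢
    exact hmemA' u hu.1 hu.2.2
  have hlow : ∀ (𝒬 : Finset (Finset V)) (P : Finset V), w ∈ P → h ≤ μ A' 𝒬 P := by
    intro 𝒬 P hwP
    have hc : h ≤ (citers A' P \ W).card :=
      le_trans hcard (Finset.card_le_card (hSsub P hwP))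
    rcases hμ with rfl | rfl | rfl
    · exact le_trans hindegw (Finset.single_le_sum (fun v _ => Nat.zero_le _) hwP)
    · exact le_trans hc (Finset.card_le_card Finset.sdiff_subset)
    · exact le_trans hc (Nat.le_add_right _ _)
  have heq : ∀ (𝒬 : Finset (Finset V)) (P : Finset V), w ∉ P → μ A' 𝒬 P = μ A 𝒬 P := by
    intro 𝒬 P hwP
    rcases hμ with rfl | rfl | rfl
    · exact Finset.sum_congr rfl fun v hv =>
        indeg_erase_eq A x (fun hq => hwP (hq ▸ hv))
    · simp only [hA', ucites, citers_erase_eq A x w hwP]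
    · simp only [hA', mcites, citers_erase_eq A x w hwP]
  have hmono : ∀ (𝒬 : Finset (Finset V)) (P : Finset V), μ A' 𝒬 P ≤ μ A 𝒬 P := by
    intro 𝒬 P
    rcases hμ with rfl | rfl | rfl
    · exact Finset.sum_le_sum fun v _ => indeg_mono hAsub v
    · exact Finset.card_le_card (citers_mono hAsub P)
    · refine Nat.add_le_add (Finset.card_le_card
        (Finset.sdiff_subset_sdiff (citers_mono hAsub P) Finset.Subset.rfl))
        (Finset.card_le_card ?_)
      intro P' hP'
      simp only [mem_filter] at hP' ⊢
      exact ⟨hP'.1, hP'.2.mono (Finset.inter_subset_inter (citers_mono hAsub P)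
        Finset.Subset.rfl)⟩
  constructor
  · rintro ⟨𝒬, hpart, hH⟩
    refine ⟨𝒬, hpart, ?_⟩
    rw [ge_hindex_iff] at hH ⊢
    refine le_trans hH (Finset.card_le_card ?_)
    intro P hP
    simp only [mem_filter] at hP ⊢
    refine ⟨hP.1, ?_⟩
    by_cases hwP : w ∈ P
    · exact hlow 𝒬 P hwP
    · rw [heq 𝒬 P hwP]; exact hP.2
  · rintro ⟨𝒬, hpart, hH⟩
    refine ⟨𝒬, hpart, ?_⟩
    rw [ge_hindex_iff] at hH ⊢
    refine le_trans hH (Finset.card_le_card ?_)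
    intro P hP
    simp only [mem_filter] at hP ⊢
    exact ⟨hP.1, le_trans hP.2 (hmono 𝒬 P)⟩
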